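/- (Theorem: algorithm for model BC.) Let A_t ∈ ℝ^{M×N} be nonnegative for t = 1,…,T, Y ∈ ℝ^{M×T} nonnegative, λ_B, μ_B, λ_C, μ_C, τ ≥ 0, and let TV, P, Z be as defined with ε_TV > 0 and nonempty neighbourhood sets. Define G(B,C) := Σ_{t=1}^T (1/2)‖A_t(BC)_{•,t} − Y_{•,t}‖₂² + λ_C‖C‖₁ + (μ_C/2)‖C‖_F² + λ_B‖B‖₁ + (μ_B/2)‖B‖_F² + (τ/2)TV(B). Given strictly positive B^{[d]} ∈ ℝ^{N×K} and C^{[d]} ∈ ℝ^{K×T}, define B^{[d+1]} := B^{[d]} ∘ (Σ_{t=1}^T A_tᵀY_{•,t}·((C^{[d]})ᵀ)_{t,•} + τP(B^{[d]}) ∘ Z(B^{[d]})) ⊘ (Σ_{t=1}^T A_tᵀA_t(B^{[d]}C^{[d]})_{•,t}·((C^{[d]})ᵀ)_{t,•} + μ_B B^{[d]} + λ_B𝟙_{N×K} + τB^{[d]} ∘ P(B^{[d]})) and C^{[d+1]}_{•,t} := C^{[d]}_{•,t} ∘ ((B^{[d+1]})ᵀA_tᵀY_{•,t}) ⊘ ((B^{[d+1]})ᵀA_tᵀA_t(B^{[d+1]}C^{[d]})_{•,t}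 + μ_C C^{[d]}_{•,t} + λ_C𝟙_{K×1}) for each t. Assume every entry of each of the two denominator matrices is strictly positive. Then G(B^{[d+1]}, C^{[d+1]}) ≤ G(B^{[d]}, C^{[d]}). -/

import Mathlib

open Matrix BigOperators

/-- `|∇_{nk}B| = sqrt(ε² + Σ_{ℓ∈𝒩_n}(B_{nk} − B_{ℓk})²)`. -/
noncomputable def gradAbs (N K : ℕ) (ε : ℝ) (nbr : Fin N → Finset (Fin N))
    (B : Matrix (Fin N) (Fin K) ℝ) (n : Fin N) (k : Fin K) : ℝ :=
  Real.sqrt (ε ^ 2 + ∑ ℓ ∈ nbr n, (B n k - B ℓ k) ^ 2)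

/-- The smoothed isotropic total variation `TV(B) = Σ_k Σ_n |∇_{nk}B|`. -/
noncomputable def smoothTV (N K : ℕ) (ε : ℝ) (nbr : Fin N → Finset (Fin N))
    (B : Matrix (Fin N) (Fin K) ℝ) : ℝ :=
  ∑ k : Fin K, ∑ n : Fin N, gradAbs N K ε nbr B n k

/-- The matrix `P(B)` from the TV surrogate construction. -/
noncomputable def Pmat (N K : ℕ) (ε : ℝ) (nbr : Fin N → Finset (Fin N))
    (B : Matrix (Fin N) (Fin K) ℝ) : Matrix (Fin N) (Fin K) ℝ :=
  fun n k =>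
    (1 / gradAbs N K ε nbr B n k) * (∑ _ℓ ∈ nbr n, (1 : ℝ))
      + ∑ ℓ ∈ Finset.univ.filter (fun ℓ => n ∈ nbr ℓ), 1 / gradAbs N K ε nbr B ℓ k

/-- The matrix `Z(B)` from the TV surrogate construction. -/
noncomputable def Zmat (N K : ℕ) (ε : ℝ) (nbr : Fin N → Finset (Fin N))
    (B : Matrix (Fin N) (Fin K) ℝ) : Matrix (Fin N) (Fin K) ℝ :=
  fun n k =>
    (1 / Pmat N K ε nbr B n k) *
      ((1 / gradAbs N K ε nbr B n k) * (∑ ℓ ∈ nbr n, (B n k + B ℓ k) / 2)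
        + ∑ ℓ ∈ Finset.univ.filter (fun ℓ => n ∈ nbr ℓ),
            (B n k + B ℓ k) / (2 * gradAbs N K ε nbr B ℓ k))

/-- The cost function of the NMF model `BC`:
`G(B,C) = Σ_t ½‖A_t(BC)_{•,t} − Y_{•,t}‖² + λ_C‖C‖₁ + (μ_C/2)‖C‖_F²
  + λ_B‖B‖₁ + (μ_B/2)‖B‖_F² + (τ/2)TV(B)`. -/
noncomputable def costBC (M N K T : ℕ)
    (A : Fin T → Matrix (Fin M) (Fin N) ℝ) (Y : Matrix (Fin M) (Fin T) ℝ)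
    (lamB muB lamC muC τ ε : ℝ) (nbr : Fin N → Finset (Fin N))
    (B : Matrix (Fin N) (Fin K) ℝ) (C : Matrix (Fin K) (Fin T) ℝ) : ℝ :=
  (∑ t, (1/2) * ∑ m, ((A t *ᵥ fun n => (B * C) n t) m - Y m t) ^ 2)
    + lamC * (∑ k, ∑ t, |C k t|) + (muC/2) * (∑ k, ∑ t, (C k t) ^ 2)
    + lamB * (∑ n, ∑ k, |B n k|) + (muB/2) * (∑ n, ∑ k, (B n k) ^ 2)
    + (τ/2) * smoothTV N K ε nbr B

lemma abs_le_quad (x b : ℝ) (hx : 0 < x) : |b| ≤ (b^2 + x^2)/(2*x) := by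
  rw [le_div_iff₀ (by positivity)]
  nlinarith [sq_abs b, sq_nonneg (|b| - x), abs_nonneg b]

lemma sqrt_le_lin (u v : ℝ) (hv : 0 < v) (hu : 0 ≤ u) :
    Real.sqrt u ≤ Real.sqrt v + (u - v) / (2 * Real.sqrt v) := by
  have hsv : 0 < Real.sqrt v := Real.sqrt_pos.2 hv
  have h1 : Real.sqrt u ^ 2 = u := Real.sq_sqrt hu
  have h2 : Real.sqrt v ^ 2 = v := Real.sq_sqrt hv.le
  rw [← sub_nonneg]
  have key : Real.sqrt v + (u - v) / (2 * Real.sqrt v) - Real.sqrt u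
      = (Real.sqrt u - Real.sqrt v)^2 / (2 * Real.sqrt v) := by
    field_simp
    nlinarith [h1, h2]
  rw [key]; positivity

lemma scalar_step (q R lam mu p z x b : ℝ) (hx : 0 < x)
    (hD : 0 < q + mu*x + lam + 2*p*x)
    (hb : b = x*(R + 2*p*z)/(q + mu*x + lam + 2*p*x)) :
    q*(b - x) + q*(b - x)^2/(2*x) - R*(b - x) + lam*((b^2 + x^2)/(2*x) - x)
      + mu/2*(b^2 - x^2) + p*((b - z)^2 - (x - z)^2) ≤ 0 := by
  set D := q + mu*x + lam + 2*p*x with hDdef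
  have hbD : b * D = x*(R + 2*p*z) := by
    rw [hb]; field_simp
  have e0 : q*(b - x) + q*(b - x)^2/(2*x) - R*(b - x) + lam*((b^2 + x^2)/(2*x) - x)
      + mu/2*(b^2 - x^2) + p*((b - z)^2 - (x - z)^2)
      = (D*(b^2 - x^2) - 2*(x*(R + 2*p*z))*(b - x))/(2*x) := by
    rw [hDdef]; field_simp; ring
  rw [e0, ← hbD]
  have e1 : (D*(b^2 - x^2) - 2*(b*D)*(b - x)) = -(D*(b-x)^2) := by ring
  rw [e1]
  have h2x : 0 < 2*x := by linarith
  exact div_nonpos_of_nonpos_of_nonneg (neg_nonpos.2 (by positivity)) h2x.le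


lemma quad_le_diag {ι : Type*} [Fintype ι] (S : ι → ι → ℝ)
    (hsym : ∀ i j, S i j = S j i) (hS0 : ∀ i j, 0 ≤ S i j)
    (x v : ι → ℝ) (hx : ∀ i, 0 < x i) :
    ∑ i, ∑ j, S i j * v i * v j ≤ ∑ i, (∑ j, S i j * x j) * v i ^ 2 / x i := by
  have hR : ∀ i, (∑ j, S i j * x j) * v i ^ 2 / x i = ∑ j, S i j * x j * v i ^ 2 / x i := by
    intro i; rw [Finset.sum_mul, Finset.sum_div]
  have hswap : ∑ i, ∑ j, S i j * x j * v i ^ 2 / x i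
      = ∑ i, ∑ j, S i j * x i * v j ^ 2 / x j := by
    rw [Finset.sum_comm]
    exact Finset.sum_congr rfl fun i _ => Finset.sum_congr rfl fun j _ => by rw [hsym]
  have key : ∀ i j, 2 * (S i j * v i * v j) ≤ S i j * x j * v i ^ 2 / x i + S i j * x i * v j ^ 2 / x j := by
    intro i j
    have h1 : x j * v i ^ 2 / x i + x i * v j ^ 2 / x j - 2 * (v i * v j)
        = (x j * v i - x i * v j)^2 / (x i * x j) := by
      field_simp [(hx i).ne', (hx j).ne']; ring
    have h2 : 0 ≤ x j * v i ^ 2 / x i + x i * v j ^ 2 / x j - 2 * (v i * v j) := by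
      rw [h1]; exact div_nonneg (sq_nonneg _) (mul_nonneg (hx i).le (hx j).le)
    have := mul_nonneg (hS0 i j) h2
    have e : S i j * x j * v i ^ 2 / x i + S i j * x i * v j ^ 2 / x j - 2 * (S i j * v i * v j)
        = S i j * (x j * v i ^ 2 / x i + x i * v j ^ 2 / x j - 2 * (v i * v j)) := by
      ring
    linarith [e ▸ this]
  have h2 : 2 * ∑ i, ∑ j, S i j * v i * v j ≤ 2 * ∑ i, ∑ j, S i j * x j * v i ^ 2 / x i := by
    have := Finset.sum_le_sum (fun i (_ : i ∈ Finset.univ) =>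
      Finset.sum_le_sum (fun j (_ : j ∈ Finset.univ) => key i j))
    calc 2 * ∑ i, ∑ j, S i j * v i * v j
        = ∑ i, ∑ j, 2 * (S i j * v i * v j) := by
          rw [Finset.mul_sum]; exact Finset.sum_congr rfl fun i _ => Finset.mul_sum _ _ _
      _ ≤ ∑ i, ∑ j, (S i j * x j * v i ^ 2 / x i + S i j * x i * v j ^ 2 / x j) := this
      _ = (∑ i, ∑ j, S i j * x j * v i ^ 2 / x i) + ∑ i, ∑ j, S i j * x i * v j ^ 2 / x j := by
          rw [← Finset.sum_add_distrib]
          exact Finset.sum_congr rfl fun i _ => Finset.sum_add_distrib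
      _ = 2 * ∑ i, ∑ j, S i j * x j * v i ^ 2 / x i := by rw [← hswap]; ring
  have := le_of_mul_le_mul_left (by linarith : 2 * ∑ i, ∑ j, S i j * v i * v j ≤ 2 * ∑ i, ∑ j, S i j * x j * v i ^ 2 / x i) (by norm_num : (0:ℝ) < 2)
  calc ∑ i, ∑ j, S i j * v i * v j ≤ ∑ i, ∑ j, S i j * x j * v i ^ 2 / x i := this
    _ = ∑ i, (∑ j, S i j * x j) * v i ^ 2 / x i := by
        exact Finset.sum_congr rfl fun i _ => (hR i).symm


lemma core_descent {ι : Type*} [Fintype ι] (S : ι → ι → ℝ)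
    (hsym : ∀ i j, S i j = S j i) (hS0 : ∀ i j, 0 ≤ S i j)
    (R : ι → ℝ) (x : ι → ℝ) (hx : ∀ i, 0 < x i)
    (lam mu : ℝ) (hlam : 0 ≤ lam) (p z : ι → ℝ)
    (x' : ι → ℝ)
    (hD : ∀ i, 0 < (∑ j, S i j * x j) + mu * x i + lam + 2 * p i * x i)
    (hx' : ∀ i, x' i = x i * (R i + 2 * p i * z i)
        / ((∑ j, S i j * x j) + mu * x i + lam + 2 * p i * x i)) :
    (1/2) * (∑ i, ∑ j, S i j * x' i * x' j) - ∑ i, R i * x' i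
      + lam * ∑ i, |x' i| + mu/2 * ∑ i, (x' i)^2 + ∑ i, p i * (x' i - z i)^2
    ≤ (1/2) * (∑ i, ∑ j, S i j * x i * x j) - ∑ i, R i * x i
      + lam * ∑ i, |x i| + mu/2 * ∑ i, (x i)^2 + ∑ i, p i * (x i - z i)^2 := by
  set Q : ι → ℝ := fun i => ∑ j, S i j * x j with hQ
  -- pointwise descent
  have hψ : ∀ i, Q i*(x' i - x i) + Q i*(x' i - x i)^2/(2*x i) - R i*(x' i - x i)
      + lam*(((x' i)^2 + (x i)^2)/(2*x i) - x i) + mu/2*((x' i)^2 - (x i)^2)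
      + p i*((x' i - z i)^2 - (x i - z i)^2) ≤ 0 :=
    fun i => scalar_step (Q i) (R i) lam mu (p i) (z i) (x i) (x' i) (hx i) (hD i) (hx' i)
  have total : ∑ i, (Q i*(x' i - x i) + Q i*(x' i - x i)^2/(2*x i) - R i*(x' i - x i)
      + lam*(((x' i)^2 + (x i)^2)/(2*x i) - x i) + mu/2*((x' i)^2 - (x i)^2)
      + p i*((x' i - z i)^2 - (x i - z i)^2)) ≤ 0 :=
    Finset.sum_nonpos (fun i _ => hψ i)
  -- split the total sum
  have bigsplit : ∑ i, (Q i*(x' i - x i) + Q i*(x' i - x i)^2/(2*x i) - R i*(x' i - x i)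
      + lam*(((x' i)^2 + (x i)^2)/(2*x i) - x i) + mu/2*((x' i)^2 - (x i)^2)
      + p i*((x' i - z i)^2 - (x i - z i)^2))
      = (∑ i, Q i*(x' i - x i)) + (∑ i, Q i*(x' i - x i)^2/(2*x i))
        - (∑ i, R i*(x' i - x i)) + (∑ i, lam*(((x' i)^2 + (x i)^2)/(2*x i) - x i))
        + (∑ i, mu/2*((x' i)^2 - (x i)^2)) + (∑ i, p i*((x' i - z i)^2 - (x i - z i)^2)) := by
    simp only [Finset.sum_add_distrib, Finset.sum_sub_distrib]
  -- quadratic expansion identity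
  have e2 : ∑ i, ∑ j, S i j * x i * (x' j - x j) = ∑ i, ∑ j, S i j * x j * (x' i - x i) := by
    rw [Finset.sum_comm]
    exact Finset.sum_congr rfl fun i _ => Finset.sum_congr rfl fun j _ => by rw [hsym]
  have e3 : ∑ i, Q i * (x' i - x i) = ∑ i, ∑ j, S i j * x j * (x' i - x i) :=
    Finset.sum_congr rfl fun i _ => by
      show (∑ j, S i j * x j) * (x' i - x i) = _
      rw [Finset.sum_mul]
  have e1 : ∑ i, ∑ j, S i j * x' i * x' j
      = (∑ i, ∑ j, S i j * x i * x j) + ((∑ i, ∑ j, S i j * x j * (x' i - x i))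
        + ((∑ i, ∑ j, S i j * x i * (x' j - x j))
        + ∑ i, ∑ j, S i j * (x' i - x i) * (x' j - x j))) := by
    have split2 : ∀ f g : ι → ι → ℝ, ∑ i, ∑ j, (f i j + g i j)
        = (∑ i, ∑ j, f i j) + ∑ i, ∑ j, g i j := fun f g => by
      simp only [Finset.sum_add_distrib]
    have estep : ∑ i, ∑ j, S i j * x' i * x' j
        = ∑ i, ∑ j, (S i j * x i * x j + (S i j * x j * (x' i - x i)
          + (S i j * x i * (x' j - x j) + S i j * (x' i - x i) * (x' j - x j)))) :=
      Finset.sum_congr rfl fun i _ => Finset.sum_congr rfl fun j _ => by ring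
    rw [estep, split2, split2, split2]
  -- diagonal bound on the quadratic remainder
  have qd0 : ∑ i, ∑ j, S i j * (x' i - x i) * (x' j - x j)
      ≤ ∑ i, (∑ j, S i j * x j) * (x' i - x i) ^ 2 / x i :=
    quad_le_diag S hsym hS0 x (fun i => x' i - x i) hx
  have qd1 : ∑ i, (∑ j, S i j * x j) * (x' i - x i) ^ 2 / x i
      = 2 * ∑ i, Q i*(x' i - x i)^2/(2*x i) := by
    rw [Finset.mul_sum]
    exact Finset.sum_congr rfl fun i _ => by
      rw [hQ]
      have : x i ≠ 0 := (hx i).ne'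
      field_simp
  -- abs bounds
  have habs1 : lam * ∑ i, |x' i| ≤ lam * ∑ i, ((x' i)^2 + (x i)^2)/(2*x i) :=
    mul_le_mul_of_nonneg_left
      (Finset.sum_le_sum fun i _ => abs_le_quad (x i) (x' i) (hx i)) hlam
  have habs2 : ∑ i, |x i| = ∑ i, x i :=
    Finset.sum_congr rfl fun i _ => abs_of_pos (hx i)
  -- distribute linear factors
  have dl : ∑ i, lam*(((x' i)^2 + (x i)^2)/(2*x i) - x i)
      = lam * ∑ i, ((x' i)^2 + (x i)^2)/(2*x i) - lam * ∑ i, x i := by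
    rw [Finset.mul_sum, Finset.mul_sum, ← Finset.sum_sub_distrib]
    exact Finset.sum_congr rfl fun i _ => by ring
  have dm : ∑ i, mu/2*((x' i)^2 - (x i)^2)
      = mu/2 * ∑ i, (x' i)^2 - mu/2 * ∑ i, (x i)^2 := by
    rw [Finset.mul_sum, Finset.mul_sum, ← Finset.sum_sub_distrib]
    exact Finset.sum_congr rfl fun i _ => by ring
  have dp : ∑ i, p i*((x' i - z i)^2 - (x i - z i)^2)
      = ∑ i, p i * (x' i - z i)^2 - ∑ i, p i * (x i - z i)^2 := by
    rw [← Finset.sum_sub_distrib]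
    exact Finset.sum_congr rfl fun i _ => by ring
  have dr : ∑ i, R i*(x' i - x i) = ∑ i, R i * x' i - ∑ i, R i * x i := by
    rw [← Finset.sum_sub_distrib]
    exact Finset.sum_congr rfl fun i _ => by ring
  rw [bigsplit, dl, dm, dp, dr] at total
  have habs2' : lam * ∑ i, |x i| = lam * ∑ i, x i := by rw [habs2]
  linarith [total, habs1, habs2', e1, e2, e3, qd0, qd1]


lemma sum_nbr_swap {N : ℕ} (nbr : Fin N → Finset (Fin N)) (f : Fin N → Fin N → ℝ) :
    ∑ n, ∑ ℓ ∈ nbr n, f n ℓ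
      = ∑ n, ∑ ℓ ∈ Finset.univ.filter (fun ℓ => n ∈ nbr ℓ), f ℓ n := by
  have h1 : ∀ n, ∑ ℓ ∈ nbr n, f n ℓ = ∑ ℓ, if ℓ ∈ nbr n then f n ℓ else 0 := by
    intro n
    rw [Finset.sum_ite_mem, Finset.univ_inter]
  have h2 : ∀ n, ∑ ℓ ∈ Finset.univ.filter (fun ℓ => n ∈ nbr ℓ), f ℓ n
      = ∑ ℓ, if n ∈ nbr ℓ then f ℓ n else 0 := fun n => Finset.sum_filter _ _
  simp only [h1, h2]
  exact Finset.sum_comm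

lemma grad_pos (N K : ℕ) (ε : ℝ) (hε : 0 < ε) (nbr : Fin N → Finset (Fin N))
    (B : Matrix (Fin N) (Fin K) ℝ) (n : Fin N) (k : Fin K) :
    0 < gradAbs N K ε nbr B n k :=
  Real.sqrt_pos.2 (add_pos_of_pos_of_nonneg (by positivity)
    (Finset.sum_nonneg fun ℓ _ => sq_nonneg _))

lemma Pmat_pos (N K : ℕ) (ε : ℝ) (hε : 0 < ε) (nbr : Fin N → Finset (Fin N))
    (hnbr : ∀ n, (nbr n).Nonempty) (B : Matrix (Fin N) (Fin K) ℝ) (n : Fin N) (k : Fin K) :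
    0 < Pmat N K ε nbr B n k := by
  unfold Pmat
  have h1 : 0 < (1 / gradAbs N K ε nbr B n k) * (∑ _ℓ ∈ nbr n, (1 : ℝ)) := by
    apply mul_pos
    · exact one_div_pos.2 (grad_pos N K ε hε nbr B n k)
    · rw [Finset.sum_const, nsmul_eq_mul, mul_one]
      exact_mod_cast Finset.card_pos.2 (hnbr n)
  have h2 : 0 ≤ ∑ ℓ ∈ Finset.univ.filter (fun ℓ => n ∈ nbr ℓ), 1 / gradAbs N K ε nbr B ℓ k :=
    Finset.sum_nonneg fun ℓ _ => le_of_lt (one_div_pos.2 (grad_pos N K ε hε nbr B ℓ k))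
  linarith

lemma PZ_eq (N K : ℕ) (ε : ℝ) (hε : 0 < ε) (nbr : Fin N → Finset (Fin N))
    (hnbr : ∀ n, (nbr n).Nonempty) (B : Matrix (Fin N) (Fin K) ℝ) (n : Fin N) (k : Fin K) :
    Pmat N K ε nbr B n k * Zmat N K ε nbr B n k
      = (1 / gradAbs N K ε nbr B n k) * (∑ ℓ ∈ nbr n, (B n k + B ℓ k) / 2)
        + ∑ ℓ ∈ Finset.univ.filter (fun ℓ => n ∈ nbr ℓ),
            (B n k + B ℓ k) / (2 * gradAbs N K ε nbr B ℓ k) := by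
  have hP := (Pmat_pos N K ε hε nbr hnbr B n k).ne'
  rw [Zmat]
  field_simp

lemma tv_majorize (N K : ℕ) (ε : ℝ) (hε : 0 < ε) (nbr : Fin N → Finset (Fin N))
    (hnbr : ∀ n, (nbr n).Nonempty) (B B' : Matrix (Fin N) (Fin K) ℝ) :
    smoothTV N K ε nbr B' ≤ smoothTV N K ε nbr B
      + ∑ k, ∑ n, Pmat N K ε nbr B n k *
          ((B' n k - Zmat N K ε nbr B n k)^2 - (B n k - Zmat N K ε nbr B n k)^2) := by
  set g : Fin N → Fin K → ℝ := fun n k => gradAbs N K ε nbr B n k with hgdef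
  have hg : ∀ n k, 0 < g n k := fun n k => grad_pos N K ε hε nbr B n k
  -- per-entry surrogate pieces
  set H : Fin N → Fin K → ℝ → ℝ := fun n k b =>
    (∑ ℓ ∈ nbr n, (b - (B n k + B ℓ k)/2)^2 / g n k)
      + ∑ ℓ ∈ Finset.univ.filter (fun ℓ => n ∈ nbr ℓ), (b - (B ℓ k + B n k)/2)^2 / g ℓ k
    with hHdef
  have perk : ∀ k, ∑ n, gradAbs N K ε nbr B' n k
      ≤ (∑ n, g n k) + ∑ n, (H n k (B' n k) - H n k (B n k)) := by
    intro k
    -- Step A1 : pointwise sqrt bound + convexity bound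
    have A1 : ∀ n, gradAbs N K ε nbr B' n k
        ≤ g n k + ((∑ ℓ ∈ nbr n, ((B' n k - (B n k + B ℓ k)/2)^2 / g n k
            + (B' ℓ k - (B n k + B ℓ k)/2)^2 / g n k))
          - ∑ ℓ ∈ nbr n, (B n k - B ℓ k)^2 / (2 * g n k)) := by
      intro n
      have hG := hg n k
      have hs1 := sqrt_le_lin (ε ^ 2 + ∑ ℓ ∈ nbr n, (B' n k - B' ℓ k) ^ 2)
        (ε ^ 2 + ∑ ℓ ∈ nbr n, (B n k - B ℓ k) ^ 2)
        (add_pos_of_pos_of_nonneg (by positivity) (Finset.sum_nonneg fun ℓ _ => sq_nonneg _))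
        (add_nonneg (by positivity) (Finset.sum_nonneg fun ℓ _ => sq_nonneg _))
      have hgv : Real.sqrt (ε ^ 2 + ∑ ℓ ∈ nbr n, (B n k - B ℓ k) ^ 2) = g n k := rfl
      have hgu : gradAbs N K ε nbr B' n k
          = Real.sqrt (ε ^ 2 + ∑ ℓ ∈ nbr n, (B' n k - B' ℓ k) ^ 2) := rfl
      have hs2 : ∑ ℓ ∈ nbr n, (B' n k - B' ℓ k) ^ 2
          ≤ ∑ ℓ ∈ nbr n, (2*(B' n k - (B n k + B ℓ k)/2)^2 + 2*(B' ℓ k - (B n k + B ℓ k)/2)^2) :=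
        Finset.sum_le_sum fun ℓ _ => by
          nlinarith [sq_nonneg (B' n k + B' ℓ k - 2*((B n k + B ℓ k)/2))]
      have hmono : ((ε ^ 2 + ∑ ℓ ∈ nbr n, (B' n k - B' ℓ k) ^ 2)
            - (ε ^ 2 + ∑ ℓ ∈ nbr n, (B n k - B ℓ k) ^ 2)) / (2 * g n k)
          ≤ ((∑ ℓ ∈ nbr n, (2*(B' n k - (B n k + B ℓ k)/2)^2 + 2*(B' ℓ k - (B n k + B ℓ k)/2)^2))
            - ∑ ℓ ∈ nbr n, (B n k - B ℓ k) ^ 2) / (2 * g n k) := by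
        apply div_le_div_of_nonneg_right ?h (by positivity)
        linarith
      have e1 : ((∑ ℓ ∈ nbr n, (2*(B' n k - (B n k + B ℓ k)/2)^2 + 2*(B' ℓ k - (B n k + B ℓ k)/2)^2))
            - ∑ ℓ ∈ nbr n, (B n k - B ℓ k) ^ 2) / (2 * g n k)
          = (∑ ℓ ∈ nbr n, ((B' n k - (B n k + B ℓ k)/2)^2 / g n k
              + (B' ℓ k - (B n k + B ℓ k)/2)^2 / g n k))
            - ∑ ℓ ∈ nbr n, (B n k - B ℓ k)^2 / (2 * g n k) := by
        rw [sub_div, Finset.sum_div, Finset.sum_div, ← Finset.sum_sub_distrib,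
          ← Finset.sum_sub_distrib]
        refine Finset.sum_congr rfl fun ℓ _ => ?_
        field_simp
      rw [hgu]
      calc Real.sqrt (ε ^ 2 + ∑ ℓ ∈ nbr n, (B' n k - B' ℓ k) ^ 2)
          ≤ g n k + ((ε ^ 2 + ∑ ℓ ∈ nbr n, (B' n k - B' ℓ k) ^ 2)
              - (ε ^ 2 + ∑ ℓ ∈ nbr n, (B n k - B ℓ k) ^ 2)) / (2 * g n k) := by
            rw [← hgv]; exact hs1
        _ ≤ g n k + (((∑ ℓ ∈ nbr n, (2*(B' n k - (B n k + B ℓ k)/2)^2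
              + 2*(B' ℓ k - (B n k + B ℓ k)/2)^2))
              - ∑ ℓ ∈ nbr n, (B n k - B ℓ k) ^ 2) / (2 * g n k)) := by linarith
        _ = _ := by rw [e1]
    -- Sum A1 over n and split
    have A2 : ∑ n, gradAbs N K ε nbr B' n k
        ≤ (∑ n, g n k)
          + ((∑ n, ∑ ℓ ∈ nbr n, (B' n k - (B n k + B ℓ k)/2)^2 / g n k)
            + (∑ n, ∑ ℓ ∈ nbr n, (B' ℓ k - (B n k + B ℓ k)/2)^2 / g n k))
          - ∑ n, ∑ ℓ ∈ nbr n, (B n k - B ℓ k)^2 / (2 * g n k) := by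
      have := Finset.sum_le_sum fun n (_ : n ∈ Finset.univ) => A1 n
      calc ∑ n, gradAbs N K ε nbr B' n k
          ≤ ∑ n, (g n k + ((∑ ℓ ∈ nbr n, ((B' n k - (B n k + B ℓ k)/2)^2 / g n k
              + (B' ℓ k - (B n k + B ℓ k)/2)^2 / g n k))
            - ∑ ℓ ∈ nbr n, (B n k - B ℓ k)^2 / (2 * g n k))) := this
        _ = _ := by
            simp only [Finset.sum_add_distrib, Finset.sum_sub_distrib]
            ring
    -- swap the second double sum
    have A3 : ∑ n, ∑ ℓ ∈ nbr n, (B' ℓ k - (B n k + B ℓ k)/2)^2 / g n k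
        = ∑ n, ∑ ℓ ∈ Finset.univ.filter (fun ℓ => n ∈ nbr ℓ),
            (B' n k - (B ℓ k + B n k)/2)^2 / g ℓ k :=
      sum_nbr_swap nbr (fun n ℓ => (B' ℓ k - (B n k + B ℓ k)/2)^2 / g n k)
    -- identity : ∑ c = ∑ H(B)
    have A5 : ∑ n, ∑ ℓ ∈ nbr n, (B n k - B ℓ k)^2 / (2 * g n k)
        = ∑ n, H n k (B n k) := by
      have swapB : ∑ n, ∑ ℓ ∈ nbr n, (B ℓ k - (B n k + B ℓ k)/2)^2 / g n k
          = ∑ n, ∑ ℓ ∈ Finset.univ.filter (fun ℓ => n ∈ nbr ℓ),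
              (B n k - (B ℓ k + B n k)/2)^2 / g ℓ k :=
        sum_nbr_swap nbr (fun n ℓ => (B ℓ k - (B n k + B ℓ k)/2)^2 / g n k)
      calc ∑ n, ∑ ℓ ∈ nbr n, (B n k - B ℓ k)^2 / (2 * g n k)
          = ∑ n, ∑ ℓ ∈ nbr n, ((B n k - (B n k + B ℓ k)/2)^2 / g n k
              + (B ℓ k - (B n k + B ℓ k)/2)^2 / g n k) :=
            Finset.sum_congr rfl fun n _ => Finset.sum_congr rfl fun ℓ _ => by
              have := (hg n k).ne'
              field_simp
              ring
        _ = (∑ n, ∑ ℓ ∈ nbr n, (B n k - (B n k + B ℓ k)/2)^2 / g n k)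
            + ∑ n, ∑ ℓ ∈ nbr n, (B ℓ k - (B n k + B ℓ k)/2)^2 / g n k := by
            simp only [Finset.sum_add_distrib]
        _ = (∑ n, ∑ ℓ ∈ nbr n, (B n k - (B n k + B ℓ k)/2)^2 / g n k)
            + ∑ n, ∑ ℓ ∈ Finset.univ.filter (fun ℓ => n ∈ nbr ℓ),
                (B n k - (B ℓ k + B n k)/2)^2 / g ℓ k := by rw [swapB]
        _ = ∑ n, H n k (B n k) := Finset.sum_add_distrib.symm
    -- combine
    have A4 : ∑ n, H n k (B' n k)
        = (∑ n, ∑ ℓ ∈ nbr n, (B' n k - (B n k + B ℓ k)/2)^2 / g n k)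
          + ∑ n, ∑ ℓ ∈ nbr n, (B' ℓ k - (B n k + B ℓ k)/2)^2 / g n k := by
      simp only [hHdef]
      rw [Finset.sum_add_distrib, A3]
    have A6 : ∑ n, (H n k (B' n k) - H n k (B n k))
        = ∑ n, H n k (B' n k) - ∑ n, H n k (B n k) := Finset.sum_sub_distrib _ _
    linarith [A2, A4, A5, A6]
  -- per-entry quadratic form of the surrogate difference
  have A7 : ∀ n k, H n k (B' n k) - H n k (B n k)
      = Pmat N K ε nbr B n k *
          ((B' n k - Zmat N K ε nbr B n k)^2 - (B n k - Zmat N K ε nbr B n k)^2) := by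
    intro n k
    have hG := (hg n k).ne'
    set b := B' n k
    set a := B n k with hadef
    set c1 : ℝ := ∑ _ℓ ∈ nbr n, (1:ℝ) with hc1
    set w1 : ℝ := ∑ ℓ ∈ nbr n, (B n k + B ℓ k)/2 with hw1
    set c2 : ℝ := ∑ ℓ ∈ Finset.univ.filter (fun ℓ => n ∈ nbr ℓ), 1 / g ℓ k with hc2
    set w2 : ℝ := ∑ ℓ ∈ Finset.univ.filter (fun ℓ => n ∈ nbr ℓ),
        (B n k + B ℓ k) / (2 * g ℓ k) with hw2
    have hP : Pmat N K ε nbr B n k = (1 / g n k) * c1 + c2 := rfl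
    have hW : Pmat N K ε nbr B n k * Zmat N K ε nbr B n k = (1 / g n k) * w1 + w2 :=
      PZ_eq N K ε hε nbr hnbr B n k
    -- expand the nbr-part
    have v1 : ∀ c : ℝ, ∑ ℓ ∈ nbr n, (c - (B n k + B ℓ k)/2)^2 / g n k
        = c^2 * ((1 / g n k) * c1) - 2*c*((1 / g n k) * w1)
          + ∑ ℓ ∈ nbr n, ((B n k + B ℓ k)/2)^2 / g n k := by
      intro c
      have e : ∀ ℓ ∈ nbr n, (c - (B n k + B ℓ k)/2)^2 / g n k
          = c^2 * ((1 / g n k) * 1) - 2*c*((1 / g n k) * ((B n k + B ℓ k)/2))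
            + ((B n k + B ℓ k)/2)^2 / g n k := fun ℓ _ => by ring
      rw [Finset.sum_congr rfl e]
      simp only [Finset.sum_add_distrib, Finset.sum_sub_distrib]
      rw [← Finset.mul_sum, ← Finset.mul_sum, ← Finset.mul_sum, ← Finset.mul_sum]
    -- expand the adjoint part
    have v2 : ∀ c : ℝ, ∑ ℓ ∈ Finset.univ.filter (fun ℓ => n ∈ nbr ℓ),
          (c - (B ℓ k + B n k)/2)^2 / g ℓ k
        = c^2 * c2 - 2*c*w2
          + ∑ ℓ ∈ Finset.univ.filter (fun ℓ => n ∈ nbr ℓ), ((B ℓ k + B n k)/2)^2 / g ℓ k := by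
      intro c
      have e : ∀ ℓ ∈ Finset.univ.filter (fun ℓ => n ∈ nbr ℓ),
          (c - (B ℓ k + B n k)/2)^2 / g ℓ k
          = c^2 * (1 / g ℓ k) - 2*c*((B n k + B ℓ k) / (2 * g ℓ k))
            + ((B ℓ k + B n k)/2)^2 / g ℓ k := fun ℓ _ => by ring
      rw [Finset.sum_congr rfl e]
      simp only [Finset.sum_add_distrib, Finset.sum_sub_distrib]
      rw [← Finset.mul_sum, ← Finset.mul_sum]
    have hHb : ∀ c : ℝ, H n k c
        = (∑ ℓ ∈ nbr n, (c - (B n k + B ℓ k)/2)^2 / g n k)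
          + ∑ ℓ ∈ Finset.univ.filter (fun ℓ => n ∈ nbr ℓ), (c - (B ℓ k + B n k)/2)^2 / g ℓ k :=
      fun c => rfl
    rw [hHb, hHb, v1, v1, v2, v2, hP]
    have hZP : Zmat N K ε nbr B n k * ((1 / g n k) * c1 + c2) = (1 / g n k) * w1 + w2 := by
      rw [← hP, mul_comm]; exact hW
    linear_combination (2*(b-a)) * hZP

  calc smoothTV N K ε nbr B'
      = ∑ k, ∑ n, gradAbs N K ε nbr B' n k := rfl
    _ ≤ ∑ k, ((∑ n, g n k) + ∑ n, (H n k (B' n k) - H n k (B n k))) :=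
        Finset.sum_le_sum fun k _ => perk k
    _ = smoothTV N K ε nbr B
        + ∑ k, ∑ n, Pmat N K ε nbr B n k *
            ((B' n k - Zmat N K ε nbr B n k)^2 - (B n k - Zmat N K ε nbr B n k)^2) := by
      rw [Finset.sum_add_distrib]
      congr 1
      exact Finset.sum_congr rfl fun k _ => Finset.sum_congr rfl fun n _ => A7 n k


lemma sq_expand {ι : Type*} [Fintype ι] (v : ι → ℝ) (y : ℝ) :
    ((∑ p, v p) - y)^2 = (∑ p, ∑ p', v p * v p') - 2*(∑ p, v p * y) + y^2 := by
  have h1 : (∑ p, v p)^2 = ∑ p, ∑ p', v p * v p' := by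
    rw [sq, Finset.sum_mul_sum]
  have h2 : (∑ p, v p) * y = ∑ p, v p * y := Finset.sum_mul _ _ _
  calc ((∑ p, v p) - y)^2 = (∑ p, v p)^2 - 2*((∑ p, v p)*y) + y^2 := by ring
    _ = _ := by rw [h1, h2]

/-- Generic expansion of a half-quadratic residual for a linear model. -/
lemma quad_expand {μ ι : Type*} [Fintype μ] [Fintype ι]
    (w : ι → μ → ℝ) (y : μ → ℝ) (c : ι → ℝ) :
    (1/2) * ∑ m, ((∑ i, w i m * c i) - y m)^2
    = (1/2) * (∑ i, ∑ j, (∑ m, w i m * w j m) * c i * c j)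
      - (∑ i, (∑ m, w i m * y m) * c i) + (1/2) * ∑ m, (y m)^2 := by
  have hsq : ∀ m, ((∑ i, w i m * c i) - y m)^2
      = (∑ i, ∑ j, (w i m * c i) * (w j m * c j)) - 2*(∑ i, (w i m * c i) * y m) + (y m)^2 :=
    fun m => sq_expand (fun i => w i m * c i) (y m)
  rw [Finset.sum_congr rfl fun m _ => hsq m]
  simp only [Finset.sum_add_distrib, Finset.sum_sub_distrib]
  have e1 : ∑ m, ∑ i, ∑ j, (w i m * c i) * (w j m * c j)
      = ∑ i, ∑ j, (∑ m, w i m * w j m) * c i * c j := by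
    rw [Finset.sum_comm]
    refine Finset.sum_congr rfl fun i _ => ?_
    rw [Finset.sum_comm]
    refine Finset.sum_congr rfl fun j _ => ?_
    rw [Finset.sum_mul, Finset.sum_mul]
    exact Finset.sum_congr rfl fun m _ => by ring
  have e2 : ∑ m, ∑ i, (w i m * c i) * y m = ∑ i, (∑ m, w i m * y m) * c i := by
    rw [Finset.sum_comm]
    refine Finset.sum_congr rfl fun i _ => ?_
    rw [Finset.sum_mul]
    exact Finset.sum_congr rfl fun m _ => by ring
  have e2' : ∑ m, 2 * ∑ i, (w i m * c i) * y m = 2 * ∑ i, (∑ m, w i m * y m) * c i := by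
    rw [← Finset.mul_sum, e2]
  rw [e1, e2']
  ring

/-- Data-fit expansion for the `C`-update (single column `t`). -/
lemma data_expand_C (M N K : ℕ) (Amat : Matrix (Fin M) (Fin N) ℝ)
    (Bp : Matrix (Fin N) (Fin K) ℝ) (y : Fin M → ℝ) (c : Fin K → ℝ) :
    (1/2) * ∑ m, ((Amat *ᵥ fun n => ∑ k, Bp n k * c k) m - y m)^2
    = (1/2) * (∑ k, ∑ k', (∑ m, (∑ n, Amat m n * Bp n k) * (∑ n, Amat m n * Bp n k'))
          * c k * c k')
      - (∑ k, (∑ m, (∑ n, Amat m n * Bp n k) * y m) * c k) + (1/2) * ∑ m, (y m)^2 := by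
  have hv : ∀ m, (Amat *ᵥ fun n => ∑ k, Bp n k * c k) m
      = ∑ k, (∑ n, Amat m n * Bp n k) * c k := by
    intro m
    simp only [Matrix.mulVec, dotProduct, Finset.mul_sum, Finset.sum_mul]
    rw [Finset.sum_comm]
    exact Finset.sum_congr rfl fun k _ => Finset.sum_congr rfl fun n _ => by ring
  rw [Finset.sum_congr rfl fun m (_ : m ∈ Finset.univ) => by rw [hv m]]
  exact quad_expand (fun k m => ∑ n, Amat m n * Bp n k) y c

/-- Data-fit expansion for the `B`-update (summed over `t`, pair index). -/
lemma data_expand_B (M N K T : ℕ) (A : Fin T → Matrix (Fin M) (Fin N) ℝ)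
    (Y : Matrix (Fin M) (Fin T) ℝ) (C : Matrix (Fin K) (Fin T) ℝ)
    (B' : Matrix (Fin N) (Fin K) ℝ) :
    (∑ t, (1/2) * ∑ m, ((A t *ᵥ fun n => (B' * C) n t) m - Y m t)^2)
    = (1/2) * (∑ p : Fin N × Fin K, ∑ p' : Fin N × Fin K,
          (∑ t, (∑ m, A t m p.1 * A t m p'.1) * (C p.2 t * C p'.2 t))
            * B' p.1 p.2 * B' p'.1 p'.2)
      - (∑ p : Fin N × Fin K, (∑ t, (∑ m, A t m p.1 * Y m t) * C p.2 t) * B' p.1 p.2)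
      + (1/2) * ∑ t, ∑ m, (Y m t)^2 := by
  have ht : ∀ t, (1/2) * ∑ m, ((A t *ᵥ fun n => (B' * C) n t) m - Y m t)^2
      = (1/2) * (∑ p : Fin N × Fin K, ∑ p' : Fin N × Fin K,
            ((∑ m, (A t m p.1 * C p.2 t) * (A t m p'.1 * C p'.2 t)))
              * B' p.1 p.2 * B' p'.1 p'.2)
        - (∑ p : Fin N × Fin K, (∑ m, (A t m p.1 * C p.2 t) * Y m t) * B' p.1 p.2)
        + (1/2) * ∑ m, (Y m t)^2 := by
    intro t
    have hv : ∀ m, (A t *ᵥ fun n => (B' * C) n t) m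
        = ∑ p : Fin N × Fin K, (A t m p.1 * C p.2 t) * B' p.1 p.2 := by
      intro m
      simp only [Matrix.mulVec, dotProduct, Matrix.mul_apply, Finset.mul_sum,
        Fintype.sum_prod_type]
      exact Finset.sum_congr rfl fun n _ => Finset.sum_congr rfl fun k _ => by ring
    rw [Finset.sum_congr rfl fun m (_ : m ∈ Finset.univ) => by rw [hv m]]
    exact quad_expand (fun (p : Fin N × Fin K) m => A t m p.1 * C p.2 t)
      (fun m => Y m t) (fun p => B' p.1 p.2)
  rw [Finset.sum_congr rfl fun t (_ : t ∈ Finset.univ) => ht t]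
  simp only [Finset.sum_add_distrib, Finset.sum_sub_distrib]
  have e1 : ∑ t, (1/2) * (∑ p : Fin N × Fin K, ∑ p' : Fin N × Fin K,
        ((∑ m, (A t m p.1 * C p.2 t) * (A t m p'.1 * C p'.2 t)))
          * B' p.1 p.2 * B' p'.1 p'.2)
      = (1/2) * (∑ p : Fin N × Fin K, ∑ p' : Fin N × Fin K,
          (∑ t, (∑ m, A t m p.1 * A t m p'.1) * (C p.2 t * C p'.2 t))
            * B' p.1 p.2 * B' p'.1 p'.2) := by
    rw [← Finset.mul_sum]
    congr 1
    rw [Finset.sum_comm]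
    refine Finset.sum_congr rfl fun p _ => ?_
    rw [Finset.sum_comm]
    refine Finset.sum_congr rfl fun p' _ => ?_
    rw [Finset.sum_mul, Finset.sum_mul]
    refine Finset.sum_congr rfl fun t _ => ?_
    have hm : ∑ m, (A t m p.1 * C p.2 t) * (A t m p'.1 * C p'.2 t)
        = (∑ m, A t m p.1 * A t m p'.1) * (C p.2 t * C p'.2 t) := by
      rw [Finset.sum_mul]
      exact Finset.sum_congr rfl fun m _ => by ring
    rw [hm]
  have e2 : ∑ t, (∑ p : Fin N × Fin K, (∑ m, (A t m p.1 * C p.2 t) * Y m t) * B' p.1 p.2)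
      = ∑ p : Fin N × Fin K, (∑ t, (∑ m, A t m p.1 * Y m t) * C p.2 t) * B' p.1 p.2 := by
    rw [Finset.sum_comm]
    refine Finset.sum_congr rfl fun p _ => ?_
    rw [Finset.sum_mul]
    refine Finset.sum_congr rfl fun t _ => ?_
    have hm : ∑ m, (A t m p.1 * C p.2 t) * Y m t
        = (∑ m, A t m p.1 * Y m t) * C p.2 t := by
      rw [Finset.sum_mul]
      exact Finset.sum_congr rfl fun m _ => by ring
    rw [hm]
  rw [e1, e2, ← Finset.mul_sum]


/-- Bridge for the `B`-side quadratic term. -/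
lemma bridge_B1 (M N K T : ℕ) (A : Fin T → Matrix (Fin M) (Fin N) ℝ)
    (C : Matrix (Fin K) (Fin T) ℝ) (B : Matrix (Fin N) (Fin K) ℝ) (p : Fin N × Fin K) :
    ∑ p' : Fin N × Fin K,
        (∑ t, (∑ m, A t m p.1 * A t m p'.1) * (C p.2 t * C p'.2 t)) * B p'.1 p'.2
      = ∑ t, (((A t)ᵀ * A t) *ᵥ fun n' => (B * C) n' t) p.1 * C p.2 t := by
  have step1 : ∑ p' : Fin N × Fin K,
        (∑ t, (∑ m, A t m p.1 * A t m p'.1) * (C p.2 t * C p'.2 t)) * B p'.1 p'.2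
      = ∑ t, ∑ p' : Fin N × Fin K,
          ((∑ m, A t m p.1 * A t m p'.1) * (C p.2 t * C p'.2 t)) * B p'.1 p'.2 := by
    rw [Finset.sum_comm]
    exact Finset.sum_congr rfl fun p' _ => Finset.sum_mul _ _ _
  rw [step1]
  refine Finset.sum_congr rfl fun t _ => ?_
  have rhs : (((A t)ᵀ * A t) *ᵥ fun n' => (B * C) n' t) p.1 * C p.2 t
      = ∑ n', ((∑ m, A t m p.1 * A t m n') * ((B * C) n' t)) * C p.2 t := by
    simp only [Matrix.mulVec, dotProduct, Matrix.mul_apply, Matrix.transpose_apply]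
    rw [Finset.sum_mul]
  rw [rhs, Fintype.sum_prod_type]
  refine Finset.sum_congr rfl fun n' _ => ?_
  have rhs2 : ((∑ m, A t m p.1 * A t m n') * ((B * C) n' t)) * C p.2 t
      = ∑ k', ((∑ m, A t m p.1 * A t m n') * (C p.2 t * C k' t)) * B n' k' := by
    rw [Matrix.mul_apply, Finset.mul_sum, Finset.sum_mul]
    exact Finset.sum_congr rfl fun k' _ => by ring
  rw [rhs2]

/-- Bridge for the `B`-side linear term. -/
lemma bridge_B2 (M N K T : ℕ) (A : Fin T → Matrix (Fin M) (Fin N) ℝ)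
    (Y : Matrix (Fin M) (Fin T) ℝ) (C : Matrix (Fin K) (Fin T) ℝ) (p : Fin N × Fin K) :
    (∑ t, (∑ m, A t m p.1 * Y m t) * C p.2 t)
      = ∑ t, ((A t)ᵀ *ᵥ fun m => Y m t) p.1 * C p.2 t := by
  refine Finset.sum_congr rfl fun t _ => ?_
  simp only [Matrix.mulVec, dotProduct, Matrix.transpose_apply]

/-- Bridge for the `C`-side quadratic term. -/
lemma bridge_C1 (M N K T : ℕ) (A : Fin T → Matrix (Fin M) (Fin N) ℝ)
    (Bp : Matrix (Fin N) (Fin K) ℝ) (C : Matrix (Fin K) (Fin T) ℝ) (t : Fin T) (k : Fin K) :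
    ∑ k', (∑ m, (∑ n, A t m n * Bp n k) * (∑ n, A t m n * Bp n k')) * C k' t
      = (Bpᵀ *ᵥ (((A t)ᵀ * A t) *ᵥ fun n => (Bp * C) n t)) k := by
  set r : Fin M → ℝ := fun m => ∑ n', A t m n' * ((Bp * C) n' t) with hr
  have hrm : ∀ m, ∑ k', (∑ n, A t m n * Bp n k') * C k' t = r m := by
    intro m
    simp only [hr, Matrix.mul_apply, Finset.mul_sum]
    rw [Finset.sum_comm]
    refine Finset.sum_congr rfl fun k' _ => ?_
    rw [Finset.sum_mul]
    exact Finset.sum_congr rfl fun n _ => by ring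
  have lhs : ∑ k', (∑ m, (∑ n, A t m n * Bp n k) * (∑ n, A t m n * Bp n k')) * C k' t
      = ∑ m, (∑ n, A t m n * Bp n k) * r m := by
    have e : ∀ k', (∑ m, (∑ n, A t m n * Bp n k) * (∑ n, A t m n * Bp n k')) * C k' t
        = ∑ m, ((∑ n, A t m n * Bp n k) * ((∑ n, A t m n * Bp n k') * C k' t)) := by
      intro k'
      rw [Finset.sum_mul]
      exact Finset.sum_congr rfl fun m _ => by ring
    rw [Finset.sum_congr rfl fun k' (_ : k' ∈ Finset.univ) => e k', Finset.sum_comm]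
    refine Finset.sum_congr rfl fun m _ => ?_
    rw [← Finset.mul_sum, hrm m]
  rw [lhs]
  have hv : ∀ n, (((A t)ᵀ * A t) *ᵥ fun n' => (Bp * C) n' t) n = ∑ m, A t m n * r m := by
    intro n
    have e0 : (((A t)ᵀ * A t) *ᵥ fun n' => (Bp * C) n' t) n
        = ∑ n', (∑ m, A t m n * A t m n') * ((Bp * C) n' t) := by
      simp only [Matrix.mulVec, dotProduct, Matrix.mul_apply, Matrix.transpose_apply]
    rw [e0]
    have e1 : ∀ n', (∑ m, A t m n * A t m n') * ((Bp * C) n' t)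
        = ∑ m, (A t m n * A t m n') * ((Bp * C) n' t) := fun n' => Finset.sum_mul _ _ _
    rw [Finset.sum_congr rfl fun n' (_ : n' ∈ Finset.univ) => e1 n', Finset.sum_comm]
    refine Finset.sum_congr rfl fun m _ => ?_
    rw [hr, Finset.mul_sum]
    exact Finset.sum_congr rfl fun n' _ => by ring
  have rhs : (Bpᵀ *ᵥ (((A t)ᵀ * A t) *ᵥ fun n => (Bp * C) n t)) k
      = ∑ n, Bp n k * ∑ m, A t m n * r m := by
    simp only [Matrix.mulVec, dotProduct, Matrix.transpose_apply]
    refine Finset.sum_congr rfl fun n _ => ?_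
    congr 1
    have := hv n
    simpa [Matrix.mulVec, dotProduct] using this
  rw [rhs]
  have l : ∀ m, (∑ n, A t m n * Bp n k) * r m = ∑ n, (A t m n * Bp n k) * r m :=
    fun m => Finset.sum_mul _ _ _
  have rr : ∀ n, Bp n k * ∑ m, A t m n * r m = ∑ m, (A t m n * Bp n k) * r m := fun n => by
    rw [Finset.mul_sum]
    exact Finset.sum_congr rfl fun m _ => by ring
  rw [Finset.sum_congr rfl fun m (_ : m ∈ Finset.univ) => l m,
    Finset.sum_congr rfl fun n (_ : n ∈ Finset.univ) => rr n, Finset.sum_comm]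

/-- Bridge for the `C`-side linear term. -/
lemma bridge_C2 (M N K T : ℕ) (A : Fin T → Matrix (Fin M) (Fin N) ℝ)
    (Bp : Matrix (Fin N) (Fin K) ℝ) (Y : Matrix (Fin M) (Fin T) ℝ) (t : Fin T) (k : Fin K) :
    ∑ m, (∑ n, A t m n * Bp n k) * Y m t
      = (Bpᵀ *ᵥ ((A t)ᵀ *ᵥ fun m => Y m t)) k := by
  simp only [Matrix.mulVec, dotProduct, Matrix.transpose_apply]
  have l : ∀ m, (∑ n, A t m n * Bp n k) * Y m t = ∑ n, Bp n k * (A t m n * Y m t) :=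
    fun m => by rw [Finset.sum_mul]; exact Finset.sum_congr rfl fun n _ => by ring
  rw [Finset.sum_congr rfl fun m (_ : m ∈ Finset.univ) => l m, Finset.sum_comm]
  exact Finset.sum_congr rfl fun n _ => (Finset.mul_sum _ _ _).symm
lemma Zmat_nonneg (N K : ℕ) (ε : ℝ) (hε : 0 < ε) (nbr : Fin N → Finset (Fin N))
    (hnbr : ∀ n, (nbr n).Nonempty) (B : Matrix (Fin N) (Fin K) ℝ)
    (hB : ∀ n k, 0 < B n k) (n : Fin N) (k : Fin K) :
    0 ≤ Zmat N K ε nbr B n k := by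
  unfold Zmat
  apply mul_nonneg
  · exact le_of_lt (one_div_pos.2 (Pmat_pos N K ε hε nbr hnbr B n k))
  · apply add_nonneg
    · apply mul_nonneg (le_of_lt (one_div_pos.2 (grad_pos N K ε hε nbr B n k)))
      exact Finset.sum_nonneg fun ℓ _ => div_nonneg (by linarith [hB n k, hB ℓ k]) (by norm_num)
    · exact Finset.sum_nonneg fun ℓ _ => div_nonneg (by linarith [hB n k, hB ℓ k])
        (mul_nonneg (by norm_num) (grad_pos N K ε hε nbr B ℓ k).le)

set_option maxHeartbeats 2000000 in
/-- **Algorithm for model `BC` (Theorem 2.3 of the paper).**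
The sequential multiplicative updates for `B` and `C` lead to a monotonic decrease of
the `BC` cost function, provided every entry of the two denominator matrices is
strictly positive. -/
theorem BC_update_decreases_cost
    (M N K T : ℕ)
    (ε : ℝ) (hε : 0 < ε)
    (nbr : Fin N → Finset (Fin N)) (hnbr : ∀ n, (nbr n).Nonempty)
    (A : Fin T → Matrix (Fin M) (Fin N) ℝ) (hA : ∀ t m n, 0 ≤ A t m n)
    (Y : Matrix (Fin M) (Fin T) ℝ) (hY : ∀ m t, 0 ≤ Y m t)
    (lamB muB lamC muC τ : ℝ)
    (hlamB : 0 ≤ lamB) (hmuB : 0 ≤ muB) (hlamC : 0 ≤ lamC) (hmuC : 0 ≤ muC) (hτ : 0 ≤ τ)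
    (B : Matrix (Fin N) (Fin K) ℝ) (hB : ∀ n k, 0 < B n k)
    (C : Matrix (Fin K) (Fin T) ℝ) (hC : ∀ k t, 0 < C k t)
    (hdenB : ∀ n k,
      0 < (∑ t, (((A t)ᵀ * A t) *ᵥ fun n' => (B * C) n' t) n * C k t)
            + muB * B n k + lamB + τ * B n k * Pmat N K ε nbr B n k)
    (Bp : Matrix (Fin N) (Fin K) ℝ)
    (hBp : ∀ n k, Bp n k =
      B n k * ((∑ t, ((A t)ᵀ *ᵥ fun m => Y m t) n * C k t)
                + τ * Pmat N K ε nbr B n k * Zmat N K ε nbr B n k)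
        / ((∑ t, (((A t)ᵀ * A t) *ᵥ fun n' => (B * C) n' t) n * C k t)
            + muB * B n k + lamB + τ * B n k * Pmat N K ε nbr B n k))
    (hdenC : ∀ k t,
      0 < (Bpᵀ *ᵥ (((A t)ᵀ * A t) *ᵥ fun n => (Bp * C) n t)) k
            + muC * C k t + lamC)
    (Cp : Matrix (Fin K) (Fin T) ℝ)
    (hCp : ∀ k t, Cp k t =
      C k t * (Bpᵀ *ᵥ ((A t)ᵀ *ᵥ fun m => Y m t)) k
        / ((Bpᵀ *ᵥ (((A t)ᵀ * A t) *ᵥ fun n => (Bp * C) n t)) k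
            + muC * C k t + lamC)) :
    costBC M N K T A Y lamB muB lamC muC τ ε nbr Bp Cp
      ≤ costBC M N K T A Y lamB muB lamC muC τ ε nbr B C := by
  -- Positivity facts
  have hBp0 : ∀ n k, 0 ≤ Bp n k := by
    intro n k
    rw [hBp n k]
    apply div_nonneg _ (hdenB n k).le
    apply mul_nonneg (hB n k).le
    apply add_nonneg
    · refine Finset.sum_nonneg fun t _ => mul_nonneg ?_ (hC k t).le
      have e : ((A t)ᵀ *ᵥ fun m => Y m t) n = ∑ m, A t m n * Y m t := by
        simp [Matrix.mulVec, dotProduct, Matrix.transpose_apply]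
      rw [e]
      exact Finset.sum_nonneg fun m _ => mul_nonneg (hA t m n) (hY m t)
    · exact mul_nonneg (mul_nonneg hτ (Pmat_pos N K ε hε nbr hnbr B n k).le)
        (Zmat_nonneg N K ε hε nbr hnbr B hB n k)
  have pairsum : ∀ f : Fin N → Fin K → ℝ,
      ∑ p : Fin N × Fin K, f p.1 p.2 = ∑ n, ∑ k, f n k := fun f => by
    rw [Fintype.sum_prod_type]
  ---------------------------------------------------------------- Part 1 : B update
  have hsymB : ∀ p p' : Fin N × Fin K,
      (∑ t, (∑ m, A t m p.1 * A t m p'.1) * (C p.2 t * C p'.2 t))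
        = ∑ t, (∑ m, A t m p'.1 * A t m p.1) * (C p'.2 t * C p.2 t) := by
    intro p p'
    refine Finset.sum_congr rfl fun t _ => ?_
    rw [Finset.sum_congr rfl fun m (_ : m ∈ Finset.univ) => mul_comm (A t m p.1) (A t m p'.1)]
    ring
  have hS0B : ∀ p p' : Fin N × Fin K,
      0 ≤ ∑ t, (∑ m, A t m p.1 * A t m p'.1) * (C p.2 t * C p'.2 t) :=
    fun p p' => Finset.sum_nonneg fun t _ => mul_nonneg
      (Finset.sum_nonneg fun m _ => mul_nonneg (hA t m p.1) (hA t m p'.1))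
      (mul_nonneg (hC p.2 t).le (hC p'.2 t).le)
  have hDB : ∀ p : Fin N × Fin K,
      0 < (∑ p' : Fin N × Fin K,
            (∑ t, (∑ m, A t m p.1 * A t m p'.1) * (C p.2 t * C p'.2 t)) * B p'.1 p'.2)
        + muB * B p.1 p.2 + lamB + 2 * (τ/2 * Pmat N K ε nbr B p.1 p.2) * B p.1 p.2 := by
    intro p
    rw [bridge_B1 M N K T A C B p]
    have h := hdenB p.1 p.2
    have e : 2 * (τ/2 * Pmat N K ε nbr B p.1 p.2) * B p.1 p.2
        = τ * B p.1 p.2 * Pmat N K ε nbr B p.1 p.2 := by ring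
    linarith [e]
  have hxB' : ∀ p : Fin N × Fin K,
      Bp p.1 p.2 = B p.1 p.2 * ((∑ t, (∑ m, A t m p.1 * Y m t) * C p.2 t)
          + 2 * (τ/2 * Pmat N K ε nbr B p.1 p.2) * Zmat N K ε nbr B p.1 p.2)
        / ((∑ p' : Fin N × Fin K,
              (∑ t, (∑ m, A t m p.1 * A t m p'.1) * (C p.2 t * C p'.2 t)) * B p'.1 p'.2)
          + muB * B p.1 p.2 + lamB + 2 * (τ/2 * Pmat N K ε nbr B p.1 p.2) * B p.1 p.2) := by
    intro p
    have hnum : B p.1 p.2 * ((∑ t, (∑ m, A t m p.1 * Y m t) * C p.2 t)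
          + 2 * (τ/2 * Pmat N K ε nbr B p.1 p.2) * Zmat N K ε nbr B p.1 p.2)
        = B p.1 p.2 * ((∑ t, ((A t)ᵀ *ᵥ fun m => Y m t) p.1 * C p.2 t)
          + τ * Pmat N K ε nbr B p.1 p.2 * Zmat N K ε nbr B p.1 p.2) := by
      rw [bridge_B2 M N K T A Y C p]
      ring
    have hden : (∑ p' : Fin N × Fin K,
            (∑ t, (∑ m, A t m p.1 * A t m p'.1) * (C p.2 t * C p'.2 t)) * B p'.1 p'.2)
          + muB * B p.1 p.2 + lamB + 2 * (τ/2 * Pmat N K ε nbr B p.1 p.2) * B p.1 p.2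
        = (∑ t, (((A t)ᵀ * A t) *ᵥ fun n' => (B * C) n' t) p.1 * C p.2 t)
          + muB * B p.1 p.2 + lamB + τ * B p.1 p.2 * Pmat N K ε nbr B p.1 p.2 := by
      rw [bridge_B1 M N K T A C B p]
      ring
    rw [hnum, hden]
    exact hBp p.1 p.2
  have coreB :
      (1/2) * (∑ p : Fin N × Fin K, ∑ p' : Fin N × Fin K,
          (∑ t, (∑ m, A t m p.1 * A t m p'.1) * (C p.2 t * C p'.2 t))
            * Bp p.1 p.2 * Bp p'.1 p'.2)
        - (∑ p : Fin N × Fin K, (∑ t, (∑ m, A t m p.1 * Y m t) * C p.2 t) * Bp p.1 p.2)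
        + lamB * ∑ p : Fin N × Fin K, |Bp p.1 p.2|
        + muB/2 * ∑ p : Fin N × Fin K, (Bp p.1 p.2)^2
        + ∑ p : Fin N × Fin K, (τ/2 * Pmat N K ε nbr B p.1 p.2)
            * (Bp p.1 p.2 - Zmat N K ε nbr B p.1 p.2)^2
      ≤ (1/2) * (∑ p : Fin N × Fin K, ∑ p' : Fin N × Fin K,
          (∑ t, (∑ m, A t m p.1 * A t m p'.1) * (C p.2 t * C p'.2 t))
            * B p.1 p.2 * B p'.1 p'.2)
        - (∑ p : Fin N × Fin K, (∑ t, (∑ m, A t m p.1 * Y m t) * C p.2 t) * B p.1 p.2)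
        + lamB * ∑ p : Fin N × Fin K, |B p.1 p.2|
        + muB/2 * ∑ p : Fin N × Fin K, (B p.1 p.2)^2
        + ∑ p : Fin N × Fin K, (τ/2 * Pmat N K ε nbr B p.1 p.2)
            * (B p.1 p.2 - Zmat N K ε nbr B p.1 p.2)^2 :=
    core_descent (ι := Fin N × Fin K)
      (fun p p' => ∑ t, (∑ m, A t m p.1 * A t m p'.1) * (C p.2 t * C p'.2 t))
      hsymB hS0B
      (fun p => ∑ t, (∑ m, A t m p.1 * Y m t) * C p.2 t)
      (fun p => B p.1 p.2) (fun p => hB p.1 p.2)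
      lamB muB hlamB
      (fun p => τ/2 * Pmat N K ε nbr B p.1 p.2)
      (fun p => Zmat N K ε nbr B p.1 p.2)
      (fun p => Bp p.1 p.2) hDB hxB'
  have edataBp := data_expand_B M N K T A Y C Bp
  have edataB := data_expand_B M N K T A Y C B
  have tvb := tv_majorize N K ε hε nbr hnbr B Bp
  have tvb2 : (τ/2) * smoothTV N K ε nbr Bp
      ≤ (τ/2) * smoothTV N K ε nbr B
        + (τ/2) * (∑ k, ∑ n, Pmat N K ε nbr B n k *
            ((Bp n k - Zmat N K ε nbr B n k)^2 - (B n k - Zmat N K ε nbr B n k)^2)) := by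
    have h := mul_le_mul_of_nonneg_left tvb (show (0:ℝ) ≤ τ/2 by linarith)
    have e := mul_add (τ/2) (smoothTV N K ε nbr B)
      (∑ k, ∑ n, Pmat N K ε nbr B n k *
        ((Bp n k - Zmat N K ε nbr B n k)^2 - (B n k - Zmat N K ε nbr B n k)^2))
    linarith [h, e]
  have etv : (τ/2) * (∑ k, ∑ n, Pmat N K ε nbr B n k *
        ((Bp n k - Zmat N K ε nbr B n k)^2 - (B n k - Zmat N K ε nbr B n k)^2))
      = (∑ p : Fin N × Fin K, (τ/2 * Pmat N K ε nbr B p.1 p.2)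
            * (Bp p.1 p.2 - Zmat N K ε nbr B p.1 p.2)^2)
        - ∑ p : Fin N × Fin K, (τ/2 * Pmat N K ε nbr B p.1 p.2)
            * (B p.1 p.2 - Zmat N K ε nbr B p.1 p.2)^2 := by
    have e1 : ∑ k, ∑ n, Pmat N K ε nbr B n k *
          ((Bp n k - Zmat N K ε nbr B n k)^2 - (B n k - Zmat N K ε nbr B n k)^2)
        = ∑ n, ∑ k, Pmat N K ε nbr B n k *
          ((Bp n k - Zmat N K ε nbr B n k)^2 - (B n k - Zmat N K ε nbr B n k)^2) :=
      Finset.sum_comm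
    have e2 := (pairsum (fun n k => Pmat N K ε nbr B n k *
        ((Bp n k - Zmat N K ε nbr B n k)^2 - (B n k - Zmat N K ε nbr B n k)^2))).symm
    rw [e1, e2, Finset.mul_sum]
    rw [Finset.sum_congr rfl (fun (p : Fin N × Fin K) (_ : p ∈ Finset.univ) =>
      (by ring : τ/2 * (Pmat N K ε nbr B p.1 p.2 *
          ((Bp p.1 p.2 - Zmat N K ε nbr B p.1 p.2)^2
            - (B p.1 p.2 - Zmat N K ε nbr B p.1 p.2)^2))
        = (τ/2 * Pmat N K ε nbr B p.1 p.2)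
            * (Bp p.1 p.2 - Zmat N K ε nbr B p.1 p.2)^2
          - (τ/2 * Pmat N K ε nbr B p.1 p.2)
            * (B p.1 p.2 - Zmat N K ε nbr B p.1 p.2)^2))]
    exact Finset.sum_sub_distrib _ _
  have l1Bp : (∑ n, ∑ k, |Bp n k|) = ∑ p : Fin N × Fin K, |Bp p.1 p.2| :=
    (pairsum _).symm
  have l1B : (∑ n, ∑ k, |B n k|) = ∑ p : Fin N × Fin K, |B p.1 p.2| :=
    (pairsum _).symm
  have l2Bp : (∑ n, ∑ k, (Bp n k)^2) = ∑ p : Fin N × Fin K, (Bp p.1 p.2)^2 :=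
    (pairsum _).symm
  have l2B : (∑ n, ∑ k, (B n k)^2) = ∑ p : Fin N × Fin K, (B p.1 p.2)^2 :=
    (pairsum _).symm
  have part1 : costBC M N K T A Y lamB muB lamC muC τ ε nbr Bp C
      ≤ costBC M N K T A Y lamB muB lamC muC τ ε nbr B C := by
    simp only [costBC]
    rw [edataBp, edataB, l1Bp, l1B, l2Bp, l2B]
    linarith [coreB, tvb2, etv]
  ---------------------------------------------------------------- Part 2 : C update
  have coreC : ∀ t : Fin T,
      (1/2) * (∑ k, ∑ k', (∑ m, (∑ n, A t m n * Bp n k) * (∑ n, A t m n * Bp n k'))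
            * Cp k t * Cp k' t)
        - (∑ k, (∑ m, (∑ n, A t m n * Bp n k) * Y m t) * Cp k t)
        + lamC * ∑ k, |Cp k t| + muC/2 * ∑ k, (Cp k t)^2
        + ∑ k, (0:ℝ) * (Cp k t - 0)^2
      ≤ (1/2) * (∑ k, ∑ k', (∑ m, (∑ n, A t m n * Bp n k) * (∑ n, A t m n * Bp n k'))
            * C k t * C k' t)
        - (∑ k, (∑ m, (∑ n, A t m n * Bp n k) * Y m t) * C k t)
        + lamC * ∑ k, |C k t| + muC/2 * ∑ k, (C k t)^2
        + ∑ k, (0:ℝ) * (C k t - 0)^2 := by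
    intro t
    have hsymC : ∀ k k' : Fin K,
        (∑ m, (∑ n, A t m n * Bp n k) * (∑ n, A t m n * Bp n k'))
          = ∑ m, (∑ n, A t m n * Bp n k') * (∑ n, A t m n * Bp n k) :=
      fun k k' => Finset.sum_congr rfl fun m _ => mul_comm _ _
    have hS0C : ∀ k k' : Fin K,
        0 ≤ ∑ m, (∑ n, A t m n * Bp n k) * (∑ n, A t m n * Bp n k') :=
      fun k k' => Finset.sum_nonneg fun m _ => mul_nonneg
        (Finset.sum_nonneg fun n _ => mul_nonneg (hA t m n) (hBp0 n k))
        (Finset.sum_nonneg fun n _ => mul_nonneg (hA t m n) (hBp0 n k'))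
    have hDC : ∀ k : Fin K,
        0 < (∑ k', (∑ m, (∑ n, A t m n * Bp n k) * (∑ n, A t m n * Bp n k')) * C k' t)
          + muC * C k t + lamC + 2 * (0:ℝ) * C k t := by
      intro k
      rw [bridge_C1 M N K T A Bp C t k]
      have h := hdenC k t
      have e : 2 * (0:ℝ) * C k t = 0 := by ring
      linarith [e]
    have hxC' : ∀ k : Fin K,
        Cp k t = C k t * ((∑ m, (∑ n, A t m n * Bp n k) * Y m t) + 2 * (0:ℝ) * 0)
          / ((∑ k', (∑ m, (∑ n, A t m n * Bp n k) * (∑ n, A t m n * Bp n k')) * C k' t)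
            + muC * C k t + lamC + 2 * (0:ℝ) * C k t) := by
      intro k
      have hnum : C k t * ((∑ m, (∑ n, A t m n * Bp n k) * Y m t) + 2 * (0:ℝ) * 0)
          = C k t * (Bpᵀ *ᵥ ((A t)ᵀ *ᵥ fun m => Y m t)) k := by
        rw [bridge_C2 M N K T A Bp Y t k]
        ring
      have hden : (∑ k', (∑ m, (∑ n, A t m n * Bp n k) * (∑ n, A t m n * Bp n k')) * C k' t)
            + muC * C k t + lamC + 2 * (0:ℝ) * C k t
          = (Bpᵀ *ᵥ (((A t)ᵀ * A t) *ᵥ fun n => (Bp * C) n t)) k + muC * C k t + lamC := by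
        rw [bridge_C1 M N K T A Bp C t k]
        ring
      rw [hnum, hden]
      exact hCp k t
    exact core_descent (ι := Fin K)
      (fun k k' => ∑ m, (∑ n, A t m n * Bp n k) * (∑ n, A t m n * Bp n k'))
      hsymC hS0C
      (fun k => ∑ m, (∑ n, A t m n * Bp n k) * Y m t)
      (fun k => C k t) (fun k => hC k t)
      lamC muC hlamC (fun _ => 0) (fun _ => 0)
      (fun k => Cp k t) hDC hxC'
  have edataC : ∀ (Cc : Matrix (Fin K) (Fin T) ℝ) (t : Fin T),
      (1/2) * ∑ m, ((A t *ᵥ fun n => (Bp * Cc) n t) m - Y m t)^2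
      = (1/2) * (∑ k, ∑ k', (∑ m, (∑ n, A t m n * Bp n k) * (∑ n, A t m n * Bp n k'))
            * Cc k t * Cc k' t)
        - (∑ k, (∑ m, (∑ n, A t m n * Bp n k) * Y m t) * Cc k t)
        + (1/2) * ∑ m, (Y m t)^2 := by
    intro Cc t
    have hfun : (fun n => (Bp * Cc) n t) = fun n => ∑ k, Bp n k * Cc k t :=
      funext fun n => Matrix.mul_apply
    rw [hfun]
    exact data_expand_C M N K (A t) Bp (fun m => Y m t) (fun k => Cc k t)
  have part2 : costBC M N K T A Y lamB muB lamC muC τ ε nbr Bp Cp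
      ≤ costBC M N K T A Y lamB muB lamC muC τ ε nbr Bp C := by
    simp only [costBC]
    rw [Finset.sum_congr rfl fun t (_ : t ∈ Finset.univ) => edataC Cp t,
        Finset.sum_congr rfl fun t (_ : t ∈ Finset.univ) => edataC C t]
    have sc := Finset.sum_le_sum (fun t (_ : t ∈ Finset.univ) => coreC t)
    simp only [zero_mul, Finset.sum_const_zero, add_zero] at sc
    simp only [Finset.sum_add_distrib, Finset.sum_sub_distrib, ← Finset.mul_sum] at sc ⊢
    have s1 : lamC * (∑ k, ∑ t, |Cp k t|) = lamC * ∑ t, ∑ k, |Cp k t| := by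
      rw [Finset.sum_comm]
    have s2 : lamC * (∑ k, ∑ t, |C k t|) = lamC * ∑ t, ∑ k, |C k t| := by
      rw [Finset.sum_comm]
    have s3 : muC/2 * (∑ k, ∑ t, (Cp k t)^2) = muC/2 * ∑ t, ∑ k, (Cp k t)^2 := by
      rw [Finset.sum_comm]
    have s4 : muC/2 * (∑ k, ∑ t, (C k t)^2) = muC/2 * ∑ t, ∑ k, (C k t)^2 := by
      rw [Finset.sum_comm]
    linarith [sc, s1, s2, s3, s4]
  exact le_trans part2 part1
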